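/- arXiv:2104.07927 — 3 statements merged into one kernel-verified Lean document; each statement's English description precedes it below -/
import Mathlib

section
/- Let t ≥ 1 and ζ ≥ 2 be integers with t dividing ζ, let G be a graph containing no K_{t,t} subgraph, let C be a set of ζ vertices of G, and let w be a vertex of G (with C the set of children of w in some tree, though only |C| = ζ matters). Then there are at most t−1 vertices u of G outside C ∪ {w} such that u is adjacent to more than ζ(t−1)/t vertices of C. -/
/-!
If `t` vertices outside `C` each had more than `ζ(t-1)/t` neighbours in `C`, each would miss fewer
than `ζ/t`, hence (as `t ∣ ζ`) at most `ζ/t - 1`, vertices of `C`. Together they miss at most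
`ζ - t` vertices, so at least `t` vertices of `C` are adjacent to all of them: a `K_{t,t}`.
-/

/-- `G` contains the complete bipartite graph `K_{s,t}` as a (not necessarily
induced) subgraph: there are disjoint vertex sets `A`, `B` of sizes `s`, `t`
with all edges between them present. -/
def ContainsKst {V : Type*} (G : SimpleGraph V) (s t : ℕ) : Prop :=
  ∃ A B : Finset V, A.card = s ∧ B.card = t ∧ Disjoint A B ∧
    ∀ a ∈ A, ∀ b ∈ B, G.Adj a b

theorem lt_div_of_mul_lt_of_add_eq {t ζ n m : ℕ} (hdvd : t ∣ ζ)
    (h : (t - 1) * ζ < t * n) (hnm : n + m = ζ) : m < ζ / t := by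
  obtain ⟨q, rfl⟩ := hdvd
  rcases t with _ | s
  · simp at h
  rw [Nat.mul_div_cancel_left q s.succ_pos]
  refine Nat.lt_of_mul_lt_mul_left (a := s + 1) ?_
  simp only [Nat.add_sub_cancel] at h
  nlinarith

namespace SimpleGraph

variable {V : Type*} (G : SimpleGraph V) [DecidableRel G.Adj]

theorem card_filter_not_forall_adj_le_sum [DecidableEq V] (A C : Finset V) :
    (C.filter fun c => ¬ ∀ a ∈ A, G.Adj a c).card ≤
      ∑ a ∈ A, (C.filter fun c => ¬ G.Adj a c).card := by
  refine (Finset.card_le_card ?_).trans Finset.card_biUnion_le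
  intro c hc
  simp only [Finset.mem_filter, not_forall] at hc
  obtain ⟨hcC, a, ha, hna⟩ := hc
  exact Finset.mem_biUnion.2 ⟨a, ha, Finset.mem_filter.2 ⟨hcC, hna⟩⟩

theorem le_card_filter_forall_adj_of_dense [DecidableEq V] {t : ℕ} (A C : Finset V)
    (hA : A.card = t) (hdvd : t ∣ C.card)
    (hdense : ∀ a ∈ A, (t - 1) * C.card < t * (C.filter fun c => G.Adj a c).card) :
    t ≤ (C.filter fun c => ∀ a ∈ A, G.Adj a c).card := by
  have hmiss : ∀ a ∈ A, (C.filter fun c => ¬ G.Adj a c).card + 1 ≤ C.card / t := fun a ha =>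
    lt_div_of_mul_lt_of_add_eq hdvd (hdense a ha) (Finset.card_filter_add_card_filter_not _)
  have hsum : ∑ a ∈ A, (C.filter fun c => ¬ G.Adj a c).card + t ≤ C.card :=
    calc ∑ a ∈ A, (C.filter fun c => ¬ G.Adj a c).card + t
        = ∑ a ∈ A, ((C.filter fun c => ¬ G.Adj a c).card + 1) := by
          rw [Finset.sum_add_distrib, Finset.sum_const, hA, smul_eq_mul, mul_one]
      _ ≤ ∑ _a ∈ A, C.card / t := Finset.sum_le_sum hmiss
      _ = C.card := by rw [Finset.sum_const, hA, smul_eq_mul, Nat.mul_div_cancel' hdvd]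
  have hsplit := Finset.card_filter_add_card_filter_not (s := C) fun c => ∀ a ∈ A, G.Adj a c
  have := G.card_filter_not_forall_adj_le_sum A C
  omega

theorem containsKst_of_le_card_filter_forall_adj {t : ℕ} (A C : Finset V) (hA : A.card = t)
    (hAC : Disjoint A C) (hcommon : t ≤ (C.filter fun c => ∀ a ∈ A, G.Adj a c).card) :
    ContainsKst G t t := by
  obtain ⟨B, hB, hBcard⟩ := Finset.exists_subset_card_eq hcommon
  refine ⟨A, B, hA, hBcard, hAC.mono_right (hB.trans (Finset.filter_subset _ _)), ?_⟩
  intro a ha b hb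
  exact (Finset.mem_filter.1 (hB hb)).2 a ha

end SimpleGraph

theorem stmt_6_general {V : Type*} [Fintype V] (G : SimpleGraph V) (t ζ : ℕ)
    (hdvd : t ∣ ζ)
    (hK : ¬ ContainsKst G t t)
    (C : Finset V) (hC : C.card = ζ) (w : V) :
    {u : V | u ∉ C ∧ u ≠ w ∧
      (t - 1) * ζ < t * {c ∈ (C : Set V) | G.Adj u c}.ncard}.ncard ≤ t - 1 := by
  classical
  subst hC
  set U := Finset.univ.filter fun u =>
    u ∉ C ∧ u ≠ w ∧ (t - 1) * C.card < t * (C.filter fun c => G.Adj u c).card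
  have hU : {u : V | u ∉ C ∧ u ≠ w ∧
      (t - 1) * C.card < t * {c ∈ (C : Set V) | G.Adj u c}.ncard} = U := by
    ext u
    simp [U, ← Finset.coe_filter, Set.ncard_coe_finset]
  rw [hU, Set.ncard_coe_finset]
  by_contra! hlarge
  obtain ⟨A, hAU, hA⟩ := Finset.exists_subset_card_eq (show t ≤ U.card by omega)
  have hmem : ∀ a ∈ A, a ∉ C ∧ (t - 1) * C.card < t * (C.filter fun c => G.Adj a c).card :=
    fun a ha => by
      obtain ⟨-, haC, -, hdense⟩ := Finset.mem_filter.1 (hAU ha)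
      exact ⟨haC, hdense⟩
  refine hK (G.containsKst_of_le_card_filter_forall_adj A C hA ?_ ?_)
  · exact Finset.disjoint_left.2 fun a ha => (hmem a ha).1
  · exact G.le_card_filter_forall_adj_of_dense A C hA hdvd fun a ha => (hmem a ha).2

/-- Let `t ≥ 1`, `ζ ≥ 2` with `t ∣ ζ`, let `G` contain no `K_{t,t}` subgraph,
let `C` be a set of `ζ` vertices and `w` a vertex outside `C`. Then at most
`t − 1` vertices `u ∉ C ∪ {w}` are adjacent to more than `ζ(t−1)/t` vertices
of `C` (the inequality `|N(u) ∩ C| > ζ(t−1)/t` is written `t·|N(u)∩C| > (t−1)·ζ`). -/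
theorem stmt_6 {V : Type*} [Fintype V] (G : SimpleGraph V) (t ζ : ℕ)
    (ht : 1 ≤ t) (hζ : 2 ≤ ζ) (hdvd : t ∣ ζ)
    (hK : ¬ ContainsKst G t t)
    (C : Finset V) (hC : C.card = ζ) (w : V) (hw : w ∉ C) :
    {u : V | u ∉ C ∧ u ≠ w ∧
      (t - 1) * ζ < t * {c ∈ (C : Set V) | G.Adj u c}.ncard}.ncard ≤ t - 1 :=
  stmt_6_general G t ζ hdvd hK C hC w
end

section
/- Let k, ζ, η ≥ 1 with ζ ≥ 2, and let (H_1, r_1), …, (H_k, r_k) be (kζ^{η+1}, η)-uniform rooted trees, each a subgraph of a graph G, such that r_i ∉ V(H_j) for all distinct i, j. Then for each i there is a (ζ, η)-uniform rooted subtree (H_i′, r_i) of (H_i, r_i) such that H_1′, …, H_k′ are pairwise vertex-disjoint. -/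
/-- The children of `u` in the tree `T` rooted at `r`: the neighbours of `u`
one step further from the root. -/
def children {V : Type*} (T : SimpleGraph V) (r u : V) : Set V :=
  {v | T.Adj u v ∧ T.dist r v = T.dist r u + 1}

/-- A rooted tree `(T, r)` is `(ζ, η)`-uniform: every vertex with a child has
exactly `ζ` children, and every childless vertex is at distance exactly `η`
from the root `r`. -/
def IsUniform {V : Type*} (T : SimpleGraph V) (r : V) (ζ η : ℕ) : Prop :=
  (∀ u, (children T r u).Nonempty → (children T r u).ncard = ζ) ∧
  (∀ u, children T r u = ∅ → T.dist r u = η)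

lemma ncard_biUnion_le' {ι W : Type*} [Finite W] (s : Finset ι) (f : ι → Set W) :
    (⋃ i ∈ s, f i).ncard ≤ ∑ i ∈ s, (f i).ncard := by
  classical
  induction s using Finset.induction with
  | empty => simp
  | @insert a s h ih =>
    rw [Finset.sum_insert h]
    calc (⋃ i ∈ insert a s, f i).ncard = (f a ∪ ⋃ i ∈ s, f i).ncard := by
          rw [Finset.set_biUnion_insert]
      _ ≤ (f a).ncard + (⋃ i ∈ s, f i).ncard := Set.ncard_union_le _ _
      _ ≤ _ := by exact Nat.add_le_add_left ih _

lemma geom_le' {ζ : ℕ} (hζ : 2 ≤ ζ) (m : ℕ) :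
    ∑ d ∈ Finset.range (m + 1), ζ ^ d ≤ ζ ^ (m + 1) - 1 := by
  induction m with
  | zero => simp; omega
  | succ m ih =>
    rw [Finset.sum_range_succ]
    have h1 : 1 ≤ ζ ^ (m + 1) := Nat.one_le_pow _ _ (by omega)
    have h2 : 2 * ζ ^ (m + 1) ≤ ζ ^ (m + 1 + 1) := by
      rw [pow_succ ζ (m + 1), mul_comm (ζ ^ (m+1)) ζ]
      exact Nat.mul_le_mul_right _ hζ
    omega

lemma unique_parent {W : Type*} {T : SimpleGraph W} (ht : T.IsTree) {root u u' v : W}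
    (hd : T.dist root u = T.dist root u') (huv : T.Adj u v) (hu'v : T.Adj u' v)
    (hv : T.dist root v = T.dist root u + 1) : u = u' := by
  obtain ⟨p, hp⟩ := ht.isConnected.exists_walk_length_eq_dist root u
  obtain ⟨q, hq⟩ := ht.isConnected.exists_walk_length_eq_dist root u'
  have hp1 : (p.concat huv).IsPath := by
    apply SimpleGraph.Walk.isPath_of_length_eq_dist
    rw [SimpleGraph.Walk.length_concat, hp, hv]
  have hq1 : (q.concat hu'v).IsPath := by
    apply SimpleGraph.Walk.isPath_of_length_eq_dist
    rw [SimpleGraph.Walk.length_concat, hq, hv, hd]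
  have := (ht.existsUnique_path root v).unique hp1 hq1
  obtain ⟨hv', -⟩ := SimpleGraph.Walk.concat_inj this
  exact hv'

open Classical in
noncomputable def pick {W : Type*} (T : SimpleGraph W) (root : W) (F : Set W) (ζ : ℕ)
    (u : W) : Set W :=
  if h : ∃ t, t ⊆ children T root u \ F ∧ t.ncard = ζ then h.choose else ∅

lemma pick_subset {W : Type*} (T : SimpleGraph W) (root : W) (F : Set W) (ζ : ℕ) (u : W) :
    pick T root F ζ u ⊆ children T root u \ F := by
  unfold pick
  classical
  split
  · next h => exact h.choose_spec.1
  · simp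

lemma pick_ncard {W : Type*} {T : SimpleGraph W} {root : W} {F : Set W} {ζ : ℕ} {u : W}
    (h : ζ ≤ (children T root u \ F).ncard) : (pick T root F ζ u).ncard = ζ := by
  obtain ⟨t, ht1, ht2⟩ := Set.exists_subset_card_eq h
  unfold pick
  classical
  split
  · next hh => exact hh.choose_spec.2
  · next hh => exact absurd ⟨t, ht1, ht2⟩ hh

lemma pick_ncard_le {W : Type*} (T : SimpleGraph W) (root : W) (F : Set W) (ζ : ℕ) (u : W) :
    (pick T root F ζ u).ncard ≤ ζ := by
  unfold pick
  classical
  split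
  · next h => exact le_of_eq h.choose_spec.2
  · simp

noncomputable def level {W : Type*} (T : SimpleGraph W) (root : W) (F : Set W) (ζ : ℕ) :
    ℕ → Set W
  | 0 => {root}
  | n + 1 => ⋃ u ∈ level T root F ζ n, pick T root F ζ u

lemma key {W : Type*} [Finite W] {T : SimpleGraph W} {root : W} (htree : T.IsTree)
    {ζ η N : ℕ} (hζ : 2 ≤ ζ) (hunif : IsUniform T root N η)
    {F : Set W} (hrF : root ∉ F) (hN : F.ncard + ζ ≤ N) :
    ∃ B : Set W, ∃ hr : root ∈ B, Disjoint B F ∧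
      (T.induce B).Connected ∧ IsUniform (T.induce B) ⟨root, hr⟩ ζ η ∧
      B.ncard ≤ ∑ d ∈ Finset.range (η + 1), ζ ^ d := by
  classical
  set S : ℕ → Set W := level T root F ζ with hS
  -- pick cardinality at internal vertices
  have hpick_card : ∀ u : W, T.dist root u < η → (pick T root F ζ u).ncard = ζ := by
    intro u hu
    have hch : (children T root u).Nonempty := by
      rw [Set.nonempty_iff_ne_empty]
      intro h
      rw [hunif.2 u h] at hu
      omega
    have hcc : (children T root u).ncard = N := hunif.1 u hch
    apply pick_ncard
    have h1 := Set.le_ncard_diff F (children T root u)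
    rw [hcc] at h1
    omega
  -- distances of levels in T
  have hlevel_dist : ∀ n, ∀ v ∈ S n, T.dist root v = n := by
    intro n
    induction n with
    | zero =>
      intro v hv
      rw [hS] at hv
      simp only [level, Set.mem_singleton_iff] at hv
      rw [hv, SimpleGraph.dist_self]
    | succ n ih =>
      intro v hv
      rw [hS] at hv
      simp only [level, Set.mem_iUnion] at hv
      obtain ⟨u, hu, hvp⟩ := hv
      have h2 := (pick_subset T root F ζ u hvp).1
      rw [h2.2, ih u hu]
  have hSF : ∀ n, ∀ v ∈ S n, v ∉ F := by
    intro n v hv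
    cases n with
    | zero =>
      rw [hS] at hv
      simp only [level, Set.mem_singleton_iff] at hv
      rw [hv]; exact hrF
    | succ n =>
      rw [hS] at hv
      simp only [level, Set.mem_iUnion] at hv
      obtain ⟨u, hu, hvp⟩ := hv
      exact (pick_subset T root F ζ u hvp).2
  set B : Set W := ⋃ d ∈ Finset.range (η + 1), S d with hB
  have hmemB : ∀ v : W, v ∈ B ↔ ∃ d, d ≤ η ∧ v ∈ S d := by
    intro v
    rw [hB]
    simp only [Set.mem_iUnion, Finset.mem_range, Nat.lt_succ_iff, exists_prop]
  have hrB : root ∈ B := (hmemB root).2 ⟨0, by omega, by rw [hS]; simp [level]⟩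
  set r' : ↥B := ⟨root, hrB⟩ with hr'
  -- pick sets stay in B
  have hlevB : ∀ n, n ≤ η → S n ⊆ B := fun n hn v hv => (hmemB v).2 ⟨n, hn, hv⟩
  have hpickS : ∀ u n, u ∈ S n → pick T root F ζ u ⊆ S (n + 1) := by
    intro u n hu v hv
    rw [hS]
    simp only [level, Set.mem_iUnion]
    exact ⟨u, hu, hv⟩
  -- adjacency in the induced graph
  have hadj : ∀ a b : ↥B, (T.induce B).Adj a b ↔ T.Adj a.val b.val := by
    intro a b; rfl
  -- walks from the root
  have hwalk : ∀ n, n ≤ η → ∀ v : W, ∀ hv : v ∈ S n,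
      ∃ (hvB : v ∈ B) (p : (T.induce B).Walk r' ⟨v, hvB⟩), p.length = n := by
    intro n
    induction n with
    | zero =>
      intro _ v hv
      rw [hS] at hv
      simp only [level, Set.mem_singleton_iff] at hv
      subst hv
      exact ⟨hrB, SimpleGraph.Walk.nil, rfl⟩
    | succ n ih =>
      intro hn v hv
      rw [hS] at hv
      simp only [level, Set.mem_iUnion] at hv
      obtain ⟨u, hu, hvp⟩ := hv
      obtain ⟨huB, p, hp⟩ := ih (by omega) u hu
      have hvB : v ∈ B := hlevB (n+1) hn (hpickS u n hu hvp)
      have hadj' : (T.induce B).Adj ⟨u, huB⟩ ⟨v, hvB⟩ :=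
        (hadj _ _).2 (pick_subset T root F ζ u hvp).1.1
      exact ⟨hvB, p.concat hadj', by rw [SimpleGraph.Walk.length_concat, hp]⟩
  have hreach : ∀ v : ↥B, (T.induce B).Reachable r' v := by
    intro v
    obtain ⟨n, hn, hvS⟩ := (hmemB v.val).1 v.2
    obtain ⟨hvB, p, -⟩ := hwalk n hn v.val hvS
    have : (⟨v.val, hvB⟩ : ↥B) = v := rfl
    exact this ▸ ⟨p⟩
  have hconn : (T.induce B).Connected := by
    rw [SimpleGraph.connected_iff]
    exact ⟨fun a b => (hreach a).symm.trans (hreach b), ⟨r'⟩⟩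
  -- distances in the induced graph
  have hdist : ∀ n, n ≤ η → ∀ v : ↥B, v.val ∈ S n → (T.induce B).dist r' v = n := by
    intro n hn v hv
    obtain ⟨hvB, p, hp⟩ := hwalk n hn v.val hv
    have hup : (T.induce B).dist r' v ≤ n := by
      have : (⟨v.val, hvB⟩ : ↥B) = v := rfl
      rw [← this, ← hp]
      exact SimpleGraph.dist_le p
    have hlow : n ≤ (T.induce B).dist r' v := by
      obtain ⟨q, hq⟩ := (hreach v).exists_walk_length_eq_dist
      have h1 := SimpleGraph.dist_le
        (q.map (⟨Subtype.val, fun h => h⟩ : (T.induce B) →g T))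
      rw [SimpleGraph.Walk.length_map, hq] at h1
      have h2 : T.dist root v.val = n := hlevel_dist n v.val hv
      have h3 : T.dist root v.val ≤ (T.induce B).dist r' v := h1
      omega
    omega
  -- children in the induced graph
  have hchild_lt : ∀ (u : ↥B) n, n < η → u.val ∈ S n →
      children (T.induce B) r' u = Subtype.val ⁻¹' (pick T root F ζ u.val) := by
    intro u n hn hu
    ext v
    constructor
    · rintro ⟨ha, hd⟩
      rw [hdist n (by omega) u hu] at hd
      obtain ⟨m, hm, hvS⟩ := (hmemB v.val).1 v.2
      have := hdist m hm v hvS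
      have hm' : m = n + 1 := by omega
      subst hm'
      rw [hS] at hvS
      simp only [level, Set.mem_iUnion] at hvS
      obtain ⟨u', hu', hvp⟩ := hvS
      have hadju : T.Adj u.val v.val := (hadj _ _).1 ha
      have hadju' : T.Adj u' v.val := (pick_subset T root F ζ u' hvp).1.1
      have heq : u.val = u' := by
        apply unique_parent htree _ hadju hadju'
        · rw [hlevel_dist (n+1) v.val (hpickS u' n hu' hvp),
            hlevel_dist n u.val hu]
        · rw [hlevel_dist n u.val hu, hlevel_dist n u' hu']
      rw [Set.mem_preimage, heq]
      exact hvp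
    · intro hv
      have hvS : v.val ∈ S (n+1) := hpickS u.val n hu hv
      refine ⟨(hadj _ _).2 (pick_subset T root F ζ u.val hv).1.1, ?_⟩
      rw [hdist (n+1) (by omega) v hvS, hdist n (by omega) u hu]
  have hchild_eq : ∀ u : ↥B, u.val ∈ S η → children (T.induce B) r' u = ∅ := by
    intro u hu
    ext v
    simp only [Set.mem_empty_iff_false, iff_false]
    rintro ⟨ha, hd⟩
    rw [hdist η le_rfl u hu] at hd
    obtain ⟨m, hm, hvS⟩ := (hmemB v.val).1 v.2
    rw [hdist m hm v hvS] at hd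
    omega
  -- cardinality of preimages
  have hpre_card : ∀ u : ↥B, ∀ n, n < η → u.val ∈ S n →
      (Subtype.val ⁻¹' (pick T root F ζ u.val) : Set ↥B).ncard = ζ := by
    intro u n hn hu
    have hsub : pick T root F ζ u.val ⊆ B :=
      fun v hv => hlevB (n+1) (by omega) (hpickS u.val n hu hv)
    have h1 : Subtype.val '' (Subtype.val ⁻¹' (pick T root F ζ u.val) : Set ↥B)
        = pick T root F ζ u.val := by
      rw [Set.image_preimage_eq_iff.2 (by rw [Subtype.range_coe]; exact hsub)]
    have h2 := Set.ncard_image_of_injective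
      (Subtype.val ⁻¹' (pick T root F ζ u.val) : Set ↥B) (Subtype.val_injective (p := (· ∈ B)))
    rw [h1] at h2
    rw [← h2]
    apply hpick_card
    rw [hlevel_dist n u.val hu]
    exact hn
  -- uniformity
  have hunif' : IsUniform (T.induce B) r' ζ η := by
    constructor
    · intro u hne
      obtain ⟨n, hn, huS⟩ := (hmemB u.val).1 u.2
      rcases Nat.lt_or_ge n η with h | h
      · rw [hchild_lt u n h huS]
        exact hpre_card u n h huS
      · have hn' : n = η := by omega
        rw [hchild_eq u (hn' ▸ huS)] at hne
        exact absurd hne (by simp)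
    · intro u hch
      obtain ⟨n, hn, huS⟩ := (hmemB u.val).1 u.2
      rcases Nat.lt_or_ge n η with h | h
      · exfalso
        rw [hchild_lt u n h huS] at hch
        have := hpre_card u n h huS
        rw [hch] at this
        simp at this
        omega
      · have hn' : n = η := by omega
        exact hn' ▸ hdist n (by omega) u huS
  -- disjointness from F
  have hdisj : Disjoint B F := by
    rw [Set.disjoint_left]
    intro v hv hvF
    obtain ⟨n, -, hvS⟩ := (hmemB v).1 hv
    exact hSF n v hvS hvF
  -- cardinality bound
  have hScard : ∀ n, (S n).ncard ≤ ζ ^ n := by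
    intro n
    induction n with
    | zero => rw [hS]; simp [level]
    | succ n ih =>
      have hfin : (S n).Finite := Set.toFinite _
      have heq : S (n+1) = ⋃ u ∈ hfin.toFinset, pick T root F ζ u := by
        ext v
        simp only [Set.Finite.mem_toFinset, Set.mem_iUnion, exists_prop]
        show v ∈ level T root F ζ (n+1) ↔ _
        simp only [level, Set.mem_iUnion, exists_prop]
        rfl
      rw [heq]
      calc (⋃ u ∈ hfin.toFinset, pick T root F ζ u).ncard
          ≤ ∑ u ∈ hfin.toFinset, (pick T root F ζ u).ncard := ncard_biUnion_le' _ _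
        _ ≤ ∑ _u ∈ hfin.toFinset, ζ :=
            Finset.sum_le_sum (fun u _ => pick_ncard_le T root F ζ u)
        _ = (S n).ncard * ζ := by
            rw [Finset.sum_const, smul_eq_mul, Set.ncard_eq_toFinset_card _ hfin]
        _ ≤ ζ ^ n * ζ := Nat.mul_le_mul_right _ ih
        _ = ζ ^ (n + 1) := by rw [pow_succ]
  have hBcard : B.ncard ≤ ∑ d ∈ Finset.range (η + 1), ζ ^ d := by
    calc B.ncard ≤ ∑ d ∈ Finset.range (η + 1), (S d).ncard := ncard_biUnion_le' _ _
      _ ≤ ∑ d ∈ Finset.range (η + 1), ζ ^ d :=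
          Finset.sum_le_sum (fun d _ => hScard d)
  exact ⟨B, hrB, hdisj, hconn, hunif', hBcard⟩

/-- Let `k, ζ, η ≥ 1` with `ζ ≥ 2`. Each rooted tree `(H i, r i)` lives on a
vertex subset `A i` of a graph `G` (and is a subgraph of `G`), is
`(k·ζ^{η+1}, η)`-uniform, and `r i ∉ A j` for `i ≠ j`. Then each `(H i, r i)`
has a `(ζ, η)`-uniform rooted subtree (an induced connected subgraph `B i`
containing the root) such that the subtrees are pairwise vertex-disjoint in `G`. -/
theorem stmt_8 {V : Type*} [Fintype V] (G : SimpleGraph V)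
    (k ζ η : ℕ) (hk : 1 ≤ k) (hζ : 2 ≤ ζ) (hη : 1 ≤ η)
    (A : Fin k → Set V) (H : ∀ i, SimpleGraph (A i)) (r : ∀ i, A i)
    (htree : ∀ i, (H i).IsTree)
    (hsub : ∀ i, ∀ u v : A i, (H i).Adj u v → G.Adj u v)
    (hroots : ∀ i j, i ≠ j → (r i : V) ∉ A j)
    (hunif : ∀ i, IsUniform (H i) (r i) (k * ζ ^ (η + 1)) η) :
    ∃ B : ∀ i, Set (A i),
      (∀ i, ∃ hr : r i ∈ B i,
        ((H i).induce (B i)).Connected ∧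
        IsUniform ((H i).induce (B i)) ⟨r i, hr⟩ ζ η) ∧
      ∀ i j, i ≠ j →
        Disjoint (Subtype.val '' (B i)) (Subtype.val '' (B j)) := by
  classical
  set Gs := ∑ d ∈ Finset.range (η + 1), ζ ^ d with hGs
  have main : ∀ n, n ≤ k → ∃ B : ∀ i : Fin k, Set (A i),
      (∀ i : Fin k, (i : ℕ) < n → ∃ hr : r i ∈ B i,
        ((H i).induce (B i)).Connected ∧
        IsUniform ((H i).induce (B i)) ⟨r i, hr⟩ ζ η) ∧
      (∀ i : Fin k, (Subtype.val '' (B i)).ncard ≤ Gs) ∧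
      (∀ i j : Fin k, i ≠ j →
        Disjoint (Subtype.val '' (B i)) (Subtype.val '' (B j))) ∧
      (∀ i : Fin k, n ≤ (i : ℕ) → B i = ∅) := by
    intro n
    induction n with
    | zero =>
      intro _
      refine ⟨fun _ => ∅, fun i hi => by omega, by simp, fun i j _ => by simp, fun _ _ => rfl⟩
    | succ n ih =>
      intro hn
      obtain ⟨B, h1, h2, h3, h4⟩ := ih (by omega)
      set i₀ : Fin k := ⟨n, by omega⟩ with hi₀
      set Fg : Set V := ⋃ j ∈ (Finset.univ : Finset (Fin k)), Subtype.val '' (B j) with hFg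
      set F : Set ↥(A i₀) := Subtype.val ⁻¹' Fg with hF
      have hmemFg : ∀ x : V, x ∈ Fg ↔ ∃ j : Fin k, x ∈ Subtype.val '' (B j) := by
        intro x; rw [hFg]; simp
      -- the root is not forbidden
      have hrF : r i₀ ∉ F := by
        intro hmem
        obtain ⟨j, hj⟩ := (hmemFg _).1 hmem
        by_cases hji : j = i₀
        · rw [hji, h4 i₀ le_rfl] at hj
          simp at hj
        · obtain ⟨b, -, hb⟩ := hj
          exact hroots i₀ j (fun h => hji h.symm) (hb ▸ b.2)
      -- cardinality of the forbidden set
      have hFcard : F.ncard ≤ (k - 1) * Gs := by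
        have hsub1 : Subtype.val '' F ⊆ Fg := Set.image_preimage_subset _ _
        have e1 : F.ncard = (Subtype.val '' F).ncard :=
          (Set.ncard_image_of_injective F Subtype.val_injective).symm
        have e2 : (Subtype.val '' F).ncard ≤ Fg.ncard :=
          Set.ncard_le_ncard hsub1 (Set.toFinite _)
        have e3 : Fg.ncard ≤ ∑ j ∈ (Finset.univ : Finset (Fin k)),
            (Subtype.val '' (B j)).ncard := ncard_biUnion_le' _ _
        have e4 : ∑ j ∈ (Finset.univ : Finset (Fin k)), (Subtype.val '' (B j)).ncard
            ≤ (k - 1) * Gs := by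
          rw [← Finset.sum_erase_add _ _ (Finset.mem_univ i₀)]
          have hz : (Subtype.val '' (B i₀)).ncard = 0 := by
            rw [h4 i₀ le_rfl]; simp
          rw [hz, add_zero]
          calc ∑ j ∈ Finset.univ.erase i₀, (Subtype.val '' (B j)).ncard
              ≤ (Finset.univ.erase i₀).card * Gs := by
                apply Finset.sum_le_card_nsmul
                intro j _
                exact h2 j
            _ = (k - 1) * Gs := by
                rw [Finset.card_erase_of_mem (Finset.mem_univ i₀), Finset.card_univ,
                  Fintype.card_fin]
        omega
      -- the counting hypothesis for the key lemma
      have hNbound : F.ncard + ζ ≤ k * ζ ^ (η + 1) := by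
        have hP1 : Gs ≤ ζ ^ (η + 1) := by
          have := geom_le' hζ η
          omega
        have hP2 : ζ ≤ ζ ^ (η + 1) := by
          calc ζ = ζ ^ 1 := (pow_one ζ).symm
            _ ≤ ζ ^ (η + 1) := Nat.pow_le_pow_right (by omega) (by omega)
        have step1 : F.ncard + ζ ≤ (k - 1) * ζ ^ (η + 1) + ζ ^ (η + 1) := by
          have : (k - 1) * Gs ≤ (k - 1) * ζ ^ (η + 1) := Nat.mul_le_mul_left _ hP1
          omega
        have step2 : (k - 1) * ζ ^ (η + 1) + ζ ^ (η + 1) = k * ζ ^ (η + 1) := by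
          have hk1 : k - 1 + 1 = k := by omega
          calc (k - 1) * ζ ^ (η + 1) + ζ ^ (η + 1) = (k - 1 + 1) * ζ ^ (η + 1) := by ring
            _ = k * ζ ^ (η + 1) := by rw [hk1]
        omega
      obtain ⟨Bn, hrBn, hdisjF, hconnn, hunifn, hcardn⟩ :=
        key (htree i₀) hζ (hunif i₀) hrF hNbound
      refine ⟨Function.update B i₀ Bn, ?_, ?_, ?_, ?_⟩
      · intro i hi
        by_cases hii : i = i₀
        · subst hii
          rw [Function.update_self]
          exact ⟨hrBn, hconnn, hunifn⟩
        · rw [Function.update_of_ne hii]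
          apply h1
          have : (i : ℕ) ≠ n := fun h => hii (Fin.ext h)
          omega
      · intro i
        by_cases hii : i = i₀
        · subst hii
          simp only [Function.update_self]
          rw [Set.ncard_image_of_injective _ Subtype.val_injective]
          exact hcardn
        · rw [Function.update_of_ne hii]
          exact h2 i
      · intro i j hij
        have hBn_disj : ∀ j : Fin k, j ≠ i₀ →
            Disjoint (Subtype.val '' Bn) (Subtype.val '' (B j)) := by
          intro j _
          rw [Set.disjoint_left]
          rintro x ⟨b, hbBn, rfl⟩ hxj
          have hbF : b ∈ F := by
            rw [hF, Set.mem_preimage]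
            exact (hmemFg _).2 ⟨j, hxj⟩
          exact Set.disjoint_left.1 hdisjF hbBn hbF
        by_cases hii : i = i₀
        · subst hii
          rw [Function.update_of_ne (fun h => hij h.symm), Function.update_self]
          exact hBn_disj j (fun h => hij h.symm)
        · by_cases hjj : j = i₀
          · subst hjj
            rw [Function.update_of_ne hii, Function.update_self]
            exact (hBn_disj i hii).symm
          · rw [Function.update_of_ne hii, Function.update_of_ne hjj]
            exact h3 i j hij
      · intro i hi
        have hii : i ≠ i₀ := by
          intro h
          rw [h] at hi
          simp [hi₀] at hi
        rw [Function.update_of_ne hii]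
        exact h4 i (by omega)
  obtain ⟨B, h1, -, h3, -⟩ := main k le_rfl
  exact ⟨B, fun i => h1 i i.isLt, h3⟩
end

section
/- Let t, η ≥ 1 and ζ ≥ 2 be integers. Let (T, r) be a (tζ, η)-uniform rooted tree that is a subgraph of a graph G, and let u ∈ V(G) ∖ V(T). If u is not t-bad for (T, r), then there is a (ζ, η)-uniform rooted subtree (S, r) of (T, r) such that u has no G-neighbour in V(S) except possibly r. -/
open SimpleGraph in
private lemma dist_le_of_mem_support' {V : Type*} {G : SimpleGraph V} {u v x : V}
    (p : G.Walk u v) (hx : x ∈ p.support) : G.dist u x ≤ p.length := by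
  classical
  exact le_trans (dist_le (p.takeUntil x hx)) (SimpleGraph.Walk.length_takeUntil_le p hx)

open SimpleGraph in
private lemma parent_exists_unique' {V : Type*} {T : SimpleGraph V} (ht : T.IsTree) (r : V)
    {v : V} (hv : 0 < T.dist r v) :
    ∃ w, (T.Adj v w ∧ T.dist r w + 1 = T.dist r v) ∧
      ∀ y, T.Adj v y → T.dist r y + 1 = T.dist r v → y = w := by
  classical
  have hconn := ht.isConnected
  have huniq : ∀ w1 w2, T.Adj v w1 → T.dist r w1 + 1 = T.dist r v →
      T.Adj v w2 → T.dist r w2 + 1 = T.dist r v → w1 = w2 := by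
    intro w1 w2 h1 hd1 h2 hd2
    obtain ⟨p1, hp1⟩ := (hconn r w1).exists_walk_length_eq_dist
    obtain ⟨p2, hp2⟩ := (hconn r w2).exists_walk_length_eq_dist
    have hp1p := p1.isPath_of_length_eq_dist hp1
    have hp2p := p2.isPath_of_length_eq_dist hp2
    have hv1 : v ∉ p1.support := by
      intro hmem
      have h := dist_le_of_mem_support' p1 hmem
      rw [hp1] at h; omega
    have hv2 : v ∉ p2.support := by
      intro hmem
      have h := dist_le_of_mem_support' p2 hmem
      rw [hp2] at h; omega
    have hq1 : (p1.concat h1.symm).IsPath := by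
      rw [← Walk.isPath_reverse_iff, Walk.reverse_concat]
      exact (Walk.cons_isPath_iff _ _).mpr ⟨hp1p.reverse, by
        simpa [Walk.support_reverse] using hv1⟩
    have hq2 : (p2.concat h2.symm).IsPath := by
      rw [← Walk.isPath_reverse_iff, Walk.reverse_concat]
      exact (Walk.cons_isPath_iff _ _).mpr ⟨hp2p.reverse, by
        simpa [Walk.support_reverse] using hv2⟩
    have heq : p1.concat h1.symm = p2.concat h2.symm := by
      have := ht.IsAcyclic.path_unique ⟨_, hq1⟩ ⟨_, hq2⟩
      exact Subtype.ext_iff.mp this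
    have hgv := congrArg (fun q : T.Walk r v => q.reverse.getVert 1) heq
    simpa [Walk.reverse_concat, Walk.getVert_cons] using hgv
  obtain ⟨q, hq⟩ := (hconn v r).exists_walk_length_eq_dist
  cases q with
  | nil =>
    exfalso
    rw [SimpleGraph.dist_comm] at hv
    simp [Walk.length_nil] at hq
    simp at hv
  | @cons _ mid _ h q' =>
    have hle1 : T.dist r mid ≤ q'.length := by rw [SimpleGraph.dist_comm]; exact dist_le q'
    have hlen : q'.length + 1 = T.dist r v := by
      rw [SimpleGraph.dist_comm]
      simpa [Walk.length_cons] using hq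
    have hge : T.dist r v ≤ T.dist r mid + 1 := by
      obtain ⟨s, hs⟩ := (hconn r mid).exists_walk_length_eq_dist
      have hd := dist_le (s.concat h.symm)
      rwa [Walk.length_concat, hs] at hd
    have hdw : T.dist r mid + 1 = T.dist r v := by omega
    exact ⟨mid, ⟨h, hdw⟩, fun y hy1 hy2 => huniq y mid hy1 hy2 h hdw⟩

/-- A vertex `u` of `G` is `t`-bad for the rooted tree `(T, r)` on the vertex
set `TS ⊆ V(G)`: some vertex `w` of `T` with exactly `ζ` children has more than
`(t−1)ζ/t` of its children `G`-adjacent to `u` (the inequality is written as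
`t·(number of children adjacent to u) > (t−1)·ζ`). -/
def TBad {V : Type*} (G : SimpleGraph V) {TS : Set V} (T : SimpleGraph TS)
    (r : TS) (t ζ : ℕ) (u : V) : Prop :=
  ∃ w : TS, (children T r w).ncard = ζ ∧
    (t - 1) * ζ < t * {v ∈ children T r w | G.Adj u v}.ncard

/-- Let `t, η ≥ 1`, `ζ ≥ 2`, let `(T, r)` be a `(tζ, η)`-uniform rooted tree on
the vertex set `TS` that is a subgraph of `G`, and let `u ∉ TS`. If `u` is not
`t`-bad for `(T, r)`, then there is a `(ζ, η)`-uniform rooted subtree (an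
induced connected subgraph `B` containing the root `r`) such that `u` has no
`G`-neighbour in `B` except possibly `r`. -/
theorem stmt_10 {V : Type*} [Fintype V] (G : SimpleGraph V)
    (t ζ η : ℕ) (ht : 1 ≤ t) (hζ : 2 ≤ ζ) (hη : 1 ≤ η)
    (TS : Set V) (T : SimpleGraph TS) (r : TS)
    (htree : T.IsTree)
    (hsub : ∀ u v : TS, T.Adj u v → G.Adj u v)
    (hunif : IsUniform T r (t * ζ) η)
    (u : V) (hu : u ∉ TS)
    (hbad : ¬ TBad G T r t (t * ζ) u) :
    ∃ B : Set TS, ∃ hr : r ∈ B,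
      ((T.induce B).Connected ∧ IsUniform (T.induce B) ⟨r, hr⟩ ζ η) ∧
      ∀ v ∈ B, G.Adj u v → (v : V) = (r : V) := by
  classical
  have hconn := htree.isConnected
  -- Choose, for each vertex with children, a set of ζ children not G-adjacent to u
  have hCex : ∀ w : TS, ∃ s : Set TS, s ⊆ children T r w ∧ (∀ v ∈ s, ¬ G.Adj u ↑v) ∧
      ((children T r w).Nonempty → s.ncard = ζ) := by
    intro w
    by_cases hne : (children T r w).Nonempty
    · have hcard : (children T r w).ncard = t * ζ := hunif.1 w hne
      have hb : ¬ ((t - 1) * (t * ζ) < t * {v ∈ children T r w | G.Adj u ↑v}.ncard) :=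
        fun h => hbad ⟨w, hcard, h⟩
      push_neg at hb
      have hA : {v ∈ children T r w | G.Adj u ↑v}.ncard ≤ (t - 1) * ζ := by
        have h1 : t * {v ∈ children T r w | G.Adj u ↑v}.ncard ≤ t * ((t - 1) * ζ) := by
          calc t * {v ∈ children T r w | G.Adj u ↑v}.ncard ≤ (t - 1) * (t * ζ) := hb
            _ = t * ((t - 1) * ζ) := by ring
        exact Nat.le_of_mul_le_mul_left h1 ht
      have hsubA : {v ∈ children T r w | G.Adj u ↑v} ⊆ children T r w := Set.sep_subset _ _
      have hdiffeq : {v ∈ children T r w | ¬ G.Adj u ↑v}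
          = children T r w \ {v ∈ children T r w | G.Adj u ↑v} := by
        ext x
        simp only [Set.mem_setOf_eq, Set.mem_diff, Set.mem_sep_iff]
        tauto
      have hdcard : ζ ≤ {v ∈ children T r w | ¬ G.Adj u ↑v}.ncard := by
        rw [hdiffeq, Set.ncard_diff hsubA (Set.toFinite _), hcard]
        have hident : (t - 1) * ζ + ζ = t * ζ := by
          cases t with
          | zero => omega
          | succ t' => simp [Nat.succ_sub_one, Nat.succ_mul]
        omega
      obtain ⟨s, hs1, hs2⟩ := Set.exists_subset_card_eq hdcard
      refine ⟨s, fun v hv => (hs1 hv).1, fun v hv => (hs1 hv).2, fun _ => hs2⟩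
    · exact ⟨∅, by simp, by simp, fun h => absurd h hne⟩
  choose C hC1 hC2 hC3 using hCex
  -- the parent function
  have hPex : ∀ v : TS, ∃ w : TS, 0 < T.dist r v →
      (T.Adj v w ∧ T.dist r w + 1 = T.dist r v) ∧
      ∀ y, T.Adj v y → T.dist r y + 1 = T.dist r v → y = w := by
    intro v
    by_cases h : 0 < T.dist r v
    · obtain ⟨w, hw, huniq⟩ := parent_exists_unique' htree r h
      exact ⟨w, fun _ => ⟨hw, huniq⟩⟩
    · exact ⟨v, fun h' => absurd h' h⟩
  choose P hP using hPex
  have hPadj : ∀ v, 0 < T.dist r v → T.Adj v (P v) := fun v h => ((hP v h).1).1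
  have hPdist : ∀ v, 0 < T.dist r v → T.dist r (P v) + 1 = T.dist r v :=
    fun v h => ((hP v h).1).2
  have hPuniq : ∀ v y, 0 < T.dist r v → T.Adj v y → T.dist r y + 1 = T.dist r v → y = P v :=
    fun v y h => (hP v h).2 y
  -- the subtree vertex set
  set B : Set TS := {v | ∀ i < T.dist r v, P^[i] v ∈ C (P^[i+1] v)} with hBdef
  have hmemB : ∀ v : TS, v ∈ B ↔ ∀ i < T.dist r v, P^[i] v ∈ C (P^[i+1] v) := fun v => Iff.rfl
  have hrB : r ∈ B := by
    rw [hmemB]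
    intro i hi
    rw [SimpleGraph.dist_self] at hi
    omega
  have hchild : ∀ w v : TS, v ∈ children T r w → P v = w ∧ 0 < T.dist r v := by
    intro w v hv
    obtain ⟨hadj, hdist⟩ := hv
    have hpos : 0 < T.dist r v := by omega
    exact ⟨(hPuniq v w hpos hadj.symm hdist.symm).symm, hpos⟩
  have hCB : ∀ w, w ∈ B → ∀ v ∈ C w, v ∈ B := by
    intro w hw v hvC
    have hvch : v ∈ children T r w := hC1 w hvC
    obtain ⟨hPv, hpos⟩ := hchild w v hvch
    have hdist : T.dist r v = T.dist r w + 1 := hvch.2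
    rw [hmemB]
    intro i hi
    match i with
    | 0 =>
      simpa [hPv] using hvC
    | (j+1) =>
      have e1 : P^[j+1] v = P^[j] w := by rw [Function.iterate_succ_apply, hPv]
      have e2 : P^[j+1+1] v = P^[j+1] w := by rw [Function.iterate_succ_apply, hPv]
      rw [e1, e2]
      exact (hmemB w).mp hw j (by omega)
  -- walks inside the induced graph
  have hwalk : ∀ (n : ℕ) (v : TS) (hv : v ∈ B), T.dist r v = n →
      ∃ p : (T.induce B).Walk ⟨v, hv⟩ ⟨r, hrB⟩, p.length = n := by
    intro n
    induction n with
    | zero =>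
      intro v hv hd
      have hvr : r = v := hconn.dist_eq_zero_iff.mp hd
      subst hvr
      exact ⟨SimpleGraph.Walk.nil, rfl⟩
    | succ n ih =>
      intro v hv hd
      have hpos : 0 < T.dist r v := by omega
      have hPB : P v ∈ B := by
        rw [hmemB]
        intro i hi
        rw [← Function.iterate_succ_apply, ← Function.iterate_succ_apply]
        exact (hmemB v).mp hv (i+1) (by have := hPdist v hpos; omega)
      have hPd : T.dist r (P v) = n := by have := hPdist v hpos; omega
      obtain ⟨p, hp⟩ := ih (P v) hPB hPd
      have hadj : (T.induce B).Adj ⟨v, hv⟩ ⟨P v, hPB⟩ := hPadj v hpos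
      exact ⟨SimpleGraph.Walk.cons hadj p, by simp [hp]⟩
  -- distances in the induced graph agree
  have hdistB : ∀ (v : TS) (hv : v ∈ B),
      (T.induce B).dist ⟨r, hrB⟩ ⟨v, hv⟩ = T.dist r v := by
    intro v hv
    obtain ⟨p, hp⟩ := hwalk (T.dist r v) v hv rfl
    have hle : (T.induce B).dist ⟨r, hrB⟩ ⟨v, hv⟩ ≤ T.dist r v := by
      rw [SimpleGraph.dist_comm]
      exact hp ▸ SimpleGraph.dist_le p
    have hge : T.dist r v ≤ (T.induce B).dist ⟨r, hrB⟩ ⟨v, hv⟩ := by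
      have hreach : (T.induce B).Reachable ⟨r, hrB⟩ ⟨v, hv⟩ := p.reverse.reachable
      obtain ⟨q, hq⟩ := hreach.exists_walk_length_eq_dist
      have := SimpleGraph.dist_le (q.map (SimpleGraph.Embedding.induce B).toHom)
      rwa [SimpleGraph.Walk.length_map, hq] at this
    omega
  -- children in the induced graph are exactly the chosen sets
  have hchildInd : ∀ (w : TS) (hw : w ∈ B) (v' : ↥B),
      v' ∈ children (T.induce B) ⟨r, hrB⟩ ⟨w, hw⟩ ↔ (v' : TS) ∈ C w := by
    rintro w hw ⟨v, hv⟩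
    simp only [children, Set.mem_setOf_eq]
    constructor
    · rintro ⟨hadj, hdist⟩
      have hadj' : T.Adj w v := hadj
      rw [hdistB v hv, hdistB w hw] at hdist
      have hch : v ∈ children T r w := ⟨hadj', hdist⟩
      obtain ⟨hPv, hpos⟩ := hchild w v hch
      have h0 := (hmemB v).mp hv 0 hpos
      simpa [hPv] using h0
    · intro hvC
      have hch : v ∈ children T r w := hC1 w hvC
      refine ⟨hch.1, ?_⟩
      rw [hdistB v hv, hdistB w hw]
      exact hch.2
  have hncardInd : ∀ (w : TS) (hw : w ∈ B),
      (children (T.induce B) ⟨r, hrB⟩ ⟨w, hw⟩).ncard = (C w).ncard := by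
    intro w hw
    have himg : Subtype.val '' (children (T.induce B) ⟨r, hrB⟩ ⟨w, hw⟩) = C w := by
      ext x
      constructor
      · rintro ⟨⟨y, hy⟩, hmem, rfl⟩
        exact (hchildInd w hw ⟨y, hy⟩).mp hmem
      · intro hx
        have hxB : x ∈ B := hCB w hw x hx
        exact ⟨⟨x, hxB⟩, (hchildInd w hw ⟨x, hxB⟩).mpr hx, rfl⟩
    rw [← himg, Set.ncard_image_of_injective _ Subtype.val_injective]
  refine ⟨B, hrB, ⟨⟨?_, ?_, ?_⟩, ?_⟩⟩
  · -- connected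
    haveI : Nonempty ↥B := ⟨⟨r, hrB⟩⟩
    refine SimpleGraph.Connected.mk ?_
    rintro ⟨a, ha⟩ ⟨b, hb⟩
    obtain ⟨pa, _⟩ := hwalk (T.dist r a) a ha rfl
    obtain ⟨pb, _⟩ := hwalk (T.dist r b) b hb rfl
    exact pa.reachable.trans pb.reachable.symm
  · -- vertices with children have ζ children
    rintro ⟨w, hw⟩ hne
    obtain ⟨v', hv'⟩ := hne
    have hCne : (C w).Nonempty := ⟨↑v', (hchildInd w hw v').mp hv'⟩
    have hchne : (children T r w).Nonempty := by
      by_contra h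
      rw [Set.not_nonempty_iff_eq_empty] at h
      have : C w ⊆ (∅ : Set TS) := h ▸ hC1 w
      exact hCne.ne_empty (Set.subset_empty_iff.mp this)
    rw [hncardInd w hw]
    exact hC3 w hchne
  · -- childless vertices are at distance η
    rintro ⟨w, hw⟩ h0
    have hCw : C w = ∅ := by
      rw [Set.eq_empty_iff_forall_notMem]
      intro v hv
      have hvB : v ∈ B := hCB w hw v hv
      have : (⟨v, hvB⟩ : ↥B) ∈ children (T.induce B) ⟨r, hrB⟩ ⟨w, hw⟩ :=
        (hchildInd w hw ⟨v, hvB⟩).mpr hv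
      rw [h0] at this
      exact this
    have hch : children T r w = ∅ := by
      by_contra h
      have hne : (children T r w).Nonempty := Set.nonempty_iff_ne_empty.mpr h
      have := hC3 w hne
      have : (C w).Nonempty := Set.nonempty_of_ncard_ne_zero (by omega)
      exact this.ne_empty hCw
    have := hunif.2 w hch
    show (T.induce B).dist ⟨r, hrB⟩ ⟨w, hw⟩ = η
    rw [hdistB w hw]
    exact this
  · -- no G-neighbours of u in B except possibly r
    intro v hvB hGadj
    by_contra hne
    have hvr : v ≠ r := fun h => hne (congrArg _ h)
    have hpos : 0 < T.dist r v := by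
      rcases Nat.eq_zero_or_pos (T.dist r v) with h0 | h
      · exact absurd (hconn.dist_eq_zero_iff.mp h0).symm hvr
      · exact h
    have h0 := (hmemB v).mp hvB 0 hpos
    simp only [Function.iterate_zero_apply, Function.iterate_one] at h0
    exact hC2 (P v) v h0 hGadj
end
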